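/- Let h : ℝⁿ → ℝ be continuous, B : (0,∞) → ℝ a continuous strictly decreasing bijection onto its range with B(s) → +∞ as s → 0⁺ (a barrier function). Let x : ℝ≥0 → ℝⁿ be continuous with h(x(0)) > 0. If the barrier state z(t) := B(h(x(t))) is finite (well-defined) for all t ≥ 0, then h(x(t)) > 0 for all t ≥ 0. -/
import Mathlib


open Filter Set

/-- If the barrier state `z(t) = B(h(x(t)))` stays finite (bounded) along a continuous
trajectory starting in the safe set, the trajectory stays in the safe set. -/
theorem safe_of_barrier_state_finite {n : ℕ}
    (h : (Fin n → ℝ) → ℝ) (B : ℝ → ℝ) (x : ℝ → Fin n → ℝ)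
    (hh : Continuous h) (hxc : Continuous x)
    (hB : ContinuousOn B (Set.Ioi 0))
    (hBanti : StrictAntiOn B (Set.Ioi 0))
    (hBbij : Set.BijOn B (Set.Ioi 0) (B '' Set.Ioi 0))
    (hBtop : Tendsto B (nhdsWithin 0 (Set.Ioi 0)) atTop)
    (h0 : h (x 0) > 0)
    (M : ℝ) (hfinite : ∀ t ≥ (0:ℝ), h (x t) > 0 → B (h (x t)) ≤ M) :
    ∀ t ≥ (0:ℝ), h (x t) > 0 := by
  -- Pick δ > 0 with B s > M for all s ∈ (0, δ).
  have hev : ∀ᶠ s in nhdsWithin 0 (Set.Ioi 0), B s > M :=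
    hBtop.eventually (eventually_gt_atTop M)
  obtain ⟨δ, hδpos, hδ⟩ : ∃ δ > 0, ∀ s ∈ Set.Ioo (0:ℝ) δ, B s > M := by
    rw [eventually_nhdsWithin_iff, Metric.eventually_nhds_iff] at hev
    obtain ⟨ε, hε, hball⟩ := hev
    refine ⟨ε, hε, fun s hs => hball ?_ hs.1⟩
    rw [Real.dist_eq, sub_zero, abs_of_pos hs.1]
    exact hs.2
  -- no trajectory value lies in (0, δ)
  have hgap : ∀ t ≥ (0:ℝ), h (x t) ∉ Set.Ioo (0:ℝ) δ := by
    intro t ht hmem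
    exact absurd (hfinite t ht hmem.1) (not_le.mpr (hδ _ hmem))
  have hf : Continuous fun t => h (x t) := hh.comp hxc
  have h0δ : δ ≤ h (x 0) := by
    by_contra hlt
    exact hgap 0 le_rfl ⟨h0, not_le.mp hlt⟩
  intro t ht
  by_contra hneg
  push_neg at hneg
  -- IVT: some c ∈ [0,t] with h (x c) = δ/2
  have hiv : (δ/2) ∈ (fun s => h (x s)) '' Set.Icc 0 t := by
    apply intermediate_value_Icc' ht hf.continuousOn
    constructor
    · linarith
    · linarith
  obtain ⟨c, hc, hceq⟩ := hiv
  have : h (x c) ∈ Set.Ioo (0:ℝ) δ := by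
    simp only [] at hceq; rw [show h (x c) = δ/2 from hceq]; constructor <;> linarith
  exact hgap c hc.1 this
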